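/- Any minimally bidder-informative deterministic protocol implementing the second-price auction on a common finite type space must let the auctioneer distinguish all losing values: for every bidder i, all distinct θ_i, θ_i' ∈ Θ, and every θ_{-i} with θ_i ≤ max_{j≠i} θ_j and θ_i' ≤ max_{j≠i} θ_j, the auctioneer's observations satisfy o_A(θ_i, θ_{-i}) ≠ o_A(θ_i', θ_{-i}). -/
import Mathlib


namespace PrivacyPaper

/-- A deterministic bilateral-communication protocol: a finite rooted tree.  Each internal
node is labeled by the bidder who moves there, an information-set (question) id `q`, and a
map from that bidder's types to the children; leaves carry outcomes. -/
inductive Protocol (n : ℕ) (Θ : Fin n → Type) (X : Type) : Type where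
  | leaf (x : X) : Protocol n Θ X
  | node (i : Fin n) (q : ℕ) (k : ℕ) (act : Θ i → Fin k) (child : Fin k → Protocol n Θ X) :
      Protocol n Θ X

namespace Protocol

variable {n : ℕ} {Θ : Fin n → Type} {X : Type} {Ω : Fin n → Type}

/-- The outcome at the leaf reached by the play path of the type profile `θ`. -/
def outcome : Protocol n Θ X → ((j : Fin n) → Θ j) → X
  | .leaf x, _ => x
  | .node i _ _ act child, θ => (child (act (θ i))).outcome θ

/-- The auctioneer's observation: the full play path, recorded as the list of
(mover, question, action) triples from the root to the leaf. -/
def oA : Protocol n Θ X → ((j : Fin n) → Θ j) → List (Fin n × ℕ × ℕ)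
  | .leaf _, _ => []
  | .node i q _ act child, θ => (i, q, (act (θ i)).val) :: (child (act (θ i))).oA θ

/-- Bidder `i`'s experience: the (question, action) pairs at her own moves on the play path. -/
def experience (i : Fin n) : Protocol n Θ X → ((j : Fin n) → Θ j) → List (ℕ × ℕ)
  | .leaf _, _ => []
  | .node j q _ act child, θ =>
      (if j = i then [(q, (act (θ j)).val)] else []) ++ (child (act (θ j))).experience i θ

/-- Bidder `i`'s observation: her own type, her experience, and her observation class
`ω i` of the final outcome. -/
def oI (P : Protocol n Θ X) (ω : (i : Fin n) → X → Ω i) (i : Fin n)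
    (θ : (j : Fin n) → Θ j) : Θ i × List (ℕ × ℕ) × Ω i :=
  (θ i, P.experience i θ, ω i (P.outcome θ))

/-- All (question, action-map) pairs of bidder `i` appearing anywhere in the tree. -/
def queriesOf (i : Fin n) : Protocol n Θ X → List (ℕ × (Θ i → ℕ))
  | .leaf _ => []
  | .node j q k act child =>
      (if h : j = i then [(q, fun a => (act (cast (congrArg Θ h.symm) a)).val)] else []) ++
        (List.finRange k).flatMap fun c => (child c).queriesOf i

/-- Measurability of strategies with respect to information sets: any two nodes of the same
bidder carrying the same question id prescribe the same action map. -/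
def Consistent (P : Protocol n Θ X) : Prop :=
  ∀ i : Fin n, ∀ p ∈ P.queriesOf i, ∀ p' ∈ P.queriesOf i, p.1 = p'.1 → p.2 = p'.2

end Protocol

variable {n : ℕ} {Θ : Fin n → Type} {X : Type} {Ω : Fin n → Type}

/-- The protocol implements the choice function `φ`. -/
def Implements (P : Protocol n Θ X) (φ : ((j : Fin n) → Θ j) → X) : Prop :=
  ∀ θ, P.outcome θ = φ θ

/-- Minimal bidder-informativeness: bidders learn nothing beyond their own type and what
they observe of the outcome. -/
def MinimallyBidderInformative (P : Protocol n Θ X) (ω : (i : Fin n) → X → Ω i)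
    (φ : ((j : Fin n) → Θ j) → X) : Prop :=
  ∀ (i : Fin n) (θ θ' : (j : Fin n) → Θ j),
    θ i = θ' i → ω i (φ θ) = ω i (φ θ') → P.oI ω i θ = P.oI ω i θ'

/-- A contextual privacy violation for bidder `i` at profile `θ`. -/
def CPV (P : Protocol n Θ X) (φ : ((j : Fin n) → Θ j) → X) (i : Fin n)
    (θ : (j : Fin n) → Θ j) : Prop :=
  ∃ a : Θ i, P.oA θ ≠ P.oA (Function.update θ i a) ∧ φ θ = φ (Function.update θ i a)

/-- `φ` violates the indistinguishable corners condition for bidder `i` at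
`{a, a'} × {t, t'}`. -/
def IndistCornersViolation (φ : ((j : Fin n) → Θ j) → X) (ω : (i : Fin n) → X → Ω i)
    (i : Fin n) (a a' : Θ i) (t t' : (j : Fin n) → Θ j) : Prop :=
  φ (Function.update t i a) = φ (Function.update t i a') ∧
  ω i (φ (Function.update t i a)) = ω i (φ (Function.update t' i a)) ∧
  φ (Function.update t' i a) ≠ φ (Function.update t' i a')

open Classical in
/-- The lowest-indexed bidder with the maximum value. -/
noncomputable def lowWinner {n : ℕ} (hn : 0 < n) (θ : Fin n → ℝ) : Fin n :=
  (Finset.univ.filter fun i => ∀ j, θ j ≤ θ i).min' (by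
    haveI : Nonempty (Fin n) := ⟨⟨0, hn⟩⟩
    obtain ⟨i, hi⟩ := Finite.exists_max θ
    exact ⟨i, Finset.mem_filter.mpr ⟨Finset.mem_univ i, hi⟩⟩)

/-- The first-price auction choice rule with truthful bidding and lowest-index
tie-breaking: the winner gets the good and pays her value, losers get `(false, 0)`. -/
noncomputable def FPA {n : ℕ} (hn : 0 < n) (θ : Fin n → ℝ) : Fin n → Bool × ℝ :=
  fun j => if j = lowWinner hn θ then (true, θ j) else (false, 0)

lemma erase_univ_nonempty {n : ℕ} (hn : 2 ≤ n) (i : Fin n) :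
    ((Finset.univ : Finset (Fin n)).erase i).Nonempty := by
  rw [← Finset.card_pos, Finset.card_erase_of_mem (Finset.mem_univ _), Finset.card_univ,
    Fintype.card_fin]
  omega

/-- The highest value among bidders other than `i`. -/
noncomputable def maxOther {n : ℕ} (hn : 2 ≤ n) (i : Fin n) (θ : Fin n → ℝ) : ℝ :=
  ((Finset.univ : Finset (Fin n)).erase i).sup' (erase_univ_nonempty hn i) θ

/-- The second-price auction choice rule with lowest-index tie-breaking: the winner gets
the good and pays the highest value among the other bidders, losers get `(false, 0)`. -/
noncomputable def SPA {n : ℕ} (hn : 2 ≤ n) (θ : Fin n → ℝ) : Fin n → Bool × ℝ :=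
  fun j =>
    if j = lowWinner (by omega) θ then
      (true, maxOther hn (lowWinner (by omega : 0 < n) θ) θ)
    else (false, 0)

section Aux

namespace Protocol

variable {n : ℕ} {Θ : Fin n → Type} {X : Type} {Ω : Fin n → Type}

/-- Question `q` cannot distinguish `a` from `a'` anywhere in `P`. -/
def GoodQ (P : Protocol n Θ X) (i : Fin n) (a a' : Θ i) (q : ℕ) : Prop :=
  ∀ p ∈ P.queriesOf i, p.1 = q → p.2 a = p.2 a'

lemma queries_sub_child {i j : Fin n} {q k : ℕ} {act : Θ j → Fin k}
    {child : Fin k → Protocol n Θ X} (c : Fin k) {p : ℕ × (Θ i → ℕ)}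
    (hp : p ∈ (child c).queriesOf i) :
    p ∈ (Protocol.node j q k act child : Protocol n Θ X).queriesOf i := by
  simp only [queriesOf, List.mem_append, List.mem_flatMap]
  exact Or.inr ⟨c, List.mem_finRange c, hp⟩

lemma self_query_mem {i : Fin n} {q k : ℕ} {act : Θ i → Fin k}
    {child : Fin k → Protocol n Θ X} :
    ((q, fun b => (act b).val) : ℕ × (Θ i → ℕ)) ∈
      (Protocol.node i q k act child).queriesOf i := by
  show ((q, fun b => (act b).val) : ℕ × (Θ i → ℕ)) ∈
    (if h : i = i then [(q, fun a => (act (cast (congrArg Θ h.symm) a)).val)] else []) ++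
      (List.finRange k).flatMap fun c => (child c).queriesOf i
  rw [dif_pos rfl]
  exact List.mem_append_left _ (List.mem_singleton.mpr rfl)

lemma outcome_eq_of_oA_eq {T : Protocol n Θ X} {θ θ' : (j : Fin n) → Θ j}
    (h : T.oA θ = T.oA θ') : T.outcome θ = T.outcome θ' := by
  induction T with
  | leaf x => rfl
  | node j q k act child ih =>
    simp only [oA, List.cons.injEq, Prod.mk.injEq, true_and] at h
    obtain ⟨hval, htail⟩ := h
    have hact : act (θ j) = act (θ' j) := Fin.val_injective hval
    simp only [outcome]
    rw [hact] at htail ⊢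
    exact ih _ htail

lemma outcome_eq_of_good {P : Protocol n Θ X} {i : Fin n}
    (θ θ' : (j : Fin n) → Θ j) (hoff : ∀ j, j ≠ i → θ j = θ' j) :
    ∀ T : Protocol n Θ X, (∀ p ∈ T.queriesOf i, p ∈ P.queriesOf i) →
      (∀ q x, (q, x) ∈ T.experience i θ → GoodQ P i (θ i) (θ' i) q) →
      T.outcome θ = T.outcome θ' := by
  intro T
  induction T with
  | leaf x => intro _ _; rfl
  | node j q k act child ih =>
    intro hsub hgood
    by_cases hj : j = i
    · subst hj
      have hmem : ((q, fun b => (act b).val) : ℕ × (Θ j → ℕ)) ∈ P.queriesOf j :=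
        hsub _ self_query_mem
      have hq : GoodQ P j (θ j) (θ' j) q := by
        apply hgood q ((act (θ j)).val)
        simp [experience]
      have hact : act (θ j) = act (θ' j) := Fin.val_injective (hq _ hmem rfl)
      simp only [outcome]
      rw [← hact]
      apply ih (act (θ j)) (fun p hp => hsub p (queries_sub_child _ hp))
      intro q' x' hx'
      apply hgood q' x'
      simp only [experience, List.mem_append]
      exact Or.inr hx'
    · simp only [outcome]
      rw [← hoff j hj]
      apply ih (act (θ j)) (fun p hp => hsub p (queries_sub_child _ hp))
      intro q' x' hx'
      apply hgood q' x'
      simp only [experience, List.mem_append]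
      exact Or.inr hx'

lemma good_of_oA_eq {P : Protocol n Θ X} (hP : P.Consistent) {i : Fin n}
    (θ θ' : (j : Fin n) → Θ j) (hoff : ∀ j, j ≠ i → θ j = θ' j) :
    ∀ T : Protocol n Θ X, (∀ p ∈ T.queriesOf i, p ∈ P.queriesOf i) →
      T.oA θ = T.oA θ' →
      ∀ q x, (q, x) ∈ T.experience i θ → GoodQ P i (θ i) (θ' i) q := by
  intro T
  induction T with
  | leaf x => intro _ _ q x h; simp [experience] at h
  | node j q k act child ih =>
    intro hsub hoa q' x' hx'
    simp only [oA, List.cons.injEq, Prod.mk.injEq, true_and] at hoa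
    obtain ⟨hval, htail⟩ := hoa
    have hact : act (θ j) = act (θ' j) := Fin.val_injective hval
    rw [← hact] at htail
    by_cases hj : j = i
    · subst hj
      simp only [experience, List.mem_append] at hx'
      rw [if_pos trivial, List.mem_singleton, Prod.mk.injEq] at hx'
      rcases hx' with ⟨hq', hx2⟩ | hx'
      · subst hq'
        intro p hp hpq
        have hmem : ((q', fun b => (act b).val) : ℕ × (Θ j → ℕ)) ∈ P.queriesOf j :=
          hsub _ self_query_mem
        have hpp := hP j p hp _ hmem hpq
        rw [hpp]
        exact hval
      · exact ih (act (θ j)) (fun p hp => hsub p (queries_sub_child _ hp)) htail q' x' hx'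
    · simp only [experience, if_neg hj, List.nil_append] at hx'
      exact ih (act (θ j)) (fun p hp => hsub p (queries_sub_child _ hp)) htail q' x' hx'

end Protocol

/-- The indistinguishable-corners argument: a consistent, minimally bidder-informative
protocol implementing `φ` must distinguish `a` from `a'` at `t` whenever the corners
condition is violated. -/
lemma oA_ne_of_corners {n : ℕ} {Θ : Fin n → Type} {X : Type} {Ω : Fin n → Type}
    {P : Protocol n Θ X} {ω : (i : Fin n) → X → Ω i}
    {φ : ((j : Fin n) → Θ j) → X}
    (hP : P.Consistent) (himp : Implements P φ)
    (hmin : MinimallyBidderInformative P ω φ)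
    {i : Fin n} {a a' : Θ i} {t t' : (j : Fin n) → Θ j}
    (hv : IndistCornersViolation φ ω i a a' t t') :
    P.oA (Function.update t i a) ≠ P.oA (Function.update t i a') := by
  intro heq
  obtain ⟨h1, h2, h3⟩ := hv
  have hoff : ∀ j, j ≠ i → Function.update t i a j = Function.update t i a' j := by
    intro j hj; rw [Function.update_of_ne hj, Function.update_of_ne hj]
  have hgood : ∀ q x, (q, x) ∈ P.experience i (Function.update t i a) →
      Protocol.GoodQ P i a a' q := by
    have hh := Protocol.good_of_oA_eq hP _ _ hoff P (fun p hp => hp) heq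
    simpa using hh
  have hoi := hmin i (Function.update t i a) (Function.update t' i a) (by simp) h2
  have hexp : P.experience i (Function.update t' i a)
      = P.experience i (Function.update t i a) := by
    have hh := congrArg (fun z : Θ i × List (ℕ × ℕ) × Ω i => z.2.1) hoi
    simpa [Protocol.oI] using hh.symm
  have hoff' : ∀ j, j ≠ i → Function.update t' i a j = Function.update t' i a' j := by
    intro j hj; rw [Function.update_of_ne hj, Function.update_of_ne hj]
  have hout : P.outcome (Function.update t' i a) = P.outcome (Function.update t' i a') := by
    apply Protocol.outcome_eq_of_good _ _ hoff' P (fun p hp => hp)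
    intro q x hx
    simpa using hgood q x (hexp ▸ hx)
  exact h3 (((himp _).symm.trans hout).trans (himp _))

end Aux


open Classical in
lemma lowWinner_mem {n : ℕ} (hn : 0 < n) (θ : Fin n → ℝ) :
    lowWinner hn θ ∈ Finset.univ.filter fun i => ∀ j, θ j ≤ θ i := by
  unfold lowWinner
  exact Finset.min'_mem _ _

lemma lowWinner_isMax {n : ℕ} (hn : 0 < n) (θ : Fin n → ℝ) (k : Fin n) :
    θ k ≤ θ (lowWinner hn θ) := by
  have h := lowWinner_mem hn θ
  exact (Finset.mem_filter.mp h).2 k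

open Classical in
lemma lowWinner_le {n : ℕ} (hn : 0 < n) (θ : Fin n → ℝ) {j : Fin n}
    (hj : ∀ k, θ k ≤ θ j) : lowWinner hn θ ≤ j := by
  unfold lowWinner
  exact Finset.min'_le _ _ (Finset.mem_filter.mpr ⟨Finset.mem_univ _, hj⟩)

lemma lowWinner_eq {n : ℕ} (hn : 0 < n) (θ : Fin n → ℝ) (w : Fin n)
    (hmax : ∀ j, θ j ≤ θ w) (hmin : ∀ j, (∀ k, θ k ≤ θ j) → w ≤ j) :
    lowWinner hn θ = w :=
  le_antisymm (lowWinner_le hn θ hmax) (hmin _ (lowWinner_isMax hn θ))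

lemma le_maxOther {n : ℕ} (hn : 2 ≤ n) (i : Fin n) (θ : Fin n → ℝ) {j : Fin n}
    (hj : j ≠ i) : θ j ≤ maxOther hn i θ :=
  Finset.le_sup' θ (Finset.mem_erase.mpr ⟨hj, Finset.mem_univ _⟩)

lemma maxOther_le {n : ℕ} (hn : 2 ≤ n) (i : Fin n) (θ : Fin n → ℝ) {c : ℝ}
    (h : ∀ j, j ≠ i → θ j ≤ c) : maxOther hn i θ ≤ c :=
  Finset.sup'_le _ _ fun j hj => h j (Finset.mem_erase.mp hj).1

lemma exists_maxOther {n : ℕ} (hn : 2 ≤ n) (i : Fin n) (θ : Fin n → ℝ) :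
    ∃ j, j ≠ i ∧ θ j = maxOther hn i θ := by
  obtain ⟨b, hb, hb2⟩ := Finset.exists_mem_eq_sup' (erase_univ_nonempty hn i) θ
  exact ⟨b, (Finset.mem_erase.mp hb).1, hb2.symm⟩

lemma spa_key {n : ℕ} (hn : 2 ≤ n) (Θ : Finset ℝ)
    (P : Protocol n (fun _ => {x : ℝ // x ∈ Θ}) (Fin n → Bool × ℝ)) (hP : P.Consistent)
    (himp : Implements P (fun θ => SPA hn fun j => (θ j : ℝ)))
    (hmin : MinimallyBidderInformative P (fun i x => x i)
      (fun θ => SPA hn fun j => (θ j : ℝ)))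
    (i : Fin n) (a a' : {x : ℝ // x ∈ Θ})
    (t : (j : Fin n) → {x : ℝ // x ∈ Θ})
    (hlt : (a' : ℝ) < (a : ℝ))
    (hla : (a : ℝ) ≤ maxOther hn i fun j => (t j : ℝ)) :
    P.oA (Function.update t i a) ≠ P.oA (Function.update t i a') := by
  have hn0 : 0 < n := by omega
  have hcoeF : ∀ (s : (j : Fin n) → {x : ℝ // x ∈ Θ}) (b : {x : ℝ // x ∈ Θ}),
      (fun j => ((Function.update s i b j : {x : ℝ // x ∈ Θ}) : ℝ))
        = Function.update (fun j => ((s j : {x : ℝ // x ∈ Θ}) : ℝ)) i (b : ℝ) := by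
    intro s b
    funext j
    by_cases hj : j = i
    · subst hj; simp
    · rw [Function.update_of_ne hj, Function.update_of_ne hj]
  by_cases hφ : SPA hn (Function.update (fun j => ((t j : ℝ))) i (a : ℝ))
      = SPA hn (Function.update (fun j => ((t j : ℝ))) i (a' : ℝ))
  · -- the interesting case: i loses with the same outcome at both profiles
    obtain ⟨j₀, hj₀i, hj₀⟩ := exists_maxOther hn i (fun j => (t j : ℝ))
    have hia' : i ≠ lowWinner hn0 (Function.update (fun j => ((t j : ℝ))) i (a' : ℝ)) := by
      intro h
      have hs := lowWinner_isMax hn0 (Function.update (fun j => ((t j : ℝ))) i (a' : ℝ)) j₀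
      rw [← h, Function.update_of_ne hj₀i, Function.update_self] at hs
      have hcon : (a : ℝ) ≤ (a' : ℝ) := hla.trans (hj₀ ▸ hs)
      linarith
    have hSPAa' : SPA hn (Function.update (fun j => ((t j : ℝ))) i (a' : ℝ)) i = (false, 0) := by
      simp only [SPA]
      split
      · next h => exact absurd h hia'
      · rfl
    have hSPAa : SPA hn (Function.update (fun j => ((t j : ℝ))) i (a : ℝ)) i = (false, 0) :=
      (congrFun hφ i).trans hSPAa'
    have hiw : i ≠ lowWinner hn0 (Function.update (fun j => ((t j : ℝ))) i (a : ℝ)) := by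
      intro h
      have h3 := hSPAa
      simp only [SPA] at h3
      split at h3
      · next => simp at h3
      · next hne2 => exact absurd h hne2
    obtain ⟨w, hwdef⟩ : ∃ w, lowWinner hn0 (Function.update (fun j => ((t j : ℝ))) i (a : ℝ)) = w :=
      ⟨_, rfl⟩
    have hiw' : i ≠ w := hwdef ▸ hiw
    have hwa : (a : ℝ) ≤ (t w : ℝ) := by
      have hs := lowWinner_isMax hn0 (Function.update (fun j => ((t j : ℝ))) i (a : ℝ)) i
      rw [hwdef, Function.update_self, Function.update_of_ne (Ne.symm hiw')] at hs
      exact hs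
    have htie : ((t w : ℝ) = (a : ℝ)) → w < i := by
      intro hT
      have hmaxi : ∀ k, (Function.update (fun j => ((t j : ℝ))) i (a : ℝ)) k
          ≤ (Function.update (fun j => ((t j : ℝ))) i (a : ℝ)) i := by
        intro k
        rw [Function.update_self]
        have hs := lowWinner_isMax hn0 (Function.update (fun j => ((t j : ℝ))) i (a : ℝ)) k
        rw [hwdef, Function.update_of_ne (Ne.symm hiw')] at hs
        exact hs.trans (le_of_eq hT)
      have hle := lowWinner_le hn0 _ hmaxi
      rw [hwdef] at hle
      exact lt_of_le_of_ne hle (Ne.symm hiw')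
    classical
    set t' : (j : Fin n) → {x : ℝ // x ∈ Θ} := fun j => if j = w then t w else a' with ht'def
    have hu : (fun j => ((Function.update t' i a j : {x : ℝ // x ∈ Θ}) : ℝ))
        = (fun j => if j = i then (a : ℝ) else if j = w then (t w : ℝ) else (a' : ℝ)) := by
      funext j
      by_cases hj : j = i
      · subst hj; simp
      · rw [Function.update_of_ne hj, if_neg hj]
        simp only [ht'def]
        by_cases hjw : j = w <;> simp [hjw]
    have hv : (fun j => ((Function.update t' i a' j : {x : ℝ // x ∈ Θ}) : ℝ))
        = (fun j => if j = w then (t w : ℝ) else (a' : ℝ)) := by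
      funext j
      by_cases hj : j = i
      · subst hj; rw [Function.update_self, if_neg hiw']
      · rw [Function.update_of_ne hj]
        simp only [ht'def]
        by_cases hjw : j = w <;> simp [hjw]
    have ha'T : (a' : ℝ) < (t w : ℝ) := lt_of_lt_of_le hlt hwa
    have hwu : lowWinner hn0
        (fun j => if j = i then (a : ℝ) else if j = w then (t w : ℝ) else (a' : ℝ)) = w := by
      apply lowWinner_eq
      · intro j
        rw [if_neg (Ne.symm hiw'), if_pos rfl]
        by_cases hj : j = i
        · rw [if_pos hj]; exact hwa
        · rw [if_neg hj]
          by_cases hjw : j = w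
          · rw [if_pos hjw]
          · rw [if_neg hjw]; exact le_of_lt ha'T
      · intro j hj
        have hTj : (t w : ℝ)
            ≤ (fun j => if j = i then (a : ℝ) else if j = w then (t w : ℝ) else (a' : ℝ)) j := by
          have hh := hj w
          dsimp only at hh ⊢
          rwa [if_neg (Ne.symm hiw'), if_pos rfl] at hh
        by_cases hji : j = i
        · subst hji
          dsimp only at hTj
          rw [if_pos rfl] at hTj
          exact le_of_lt (htie (le_antisymm hTj hwa))
        · by_cases hjw : j = w
          · exact le_of_eq hjw.symm
          · exfalso
            dsimp only at hTj
            rw [if_neg hji, if_neg hjw] at hTj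
            linarith
    have hwv : lowWinner hn0 (fun j => if j = w then (t w : ℝ) else (a' : ℝ)) = w := by
      apply lowWinner_eq
      · intro j
        rw [if_pos rfl]
        by_cases hjw : j = w
        · rw [if_pos hjw]
        · rw [if_neg hjw]; exact le_of_lt ha'T
      · intro j hj
        by_cases hjw : j = w
        · exact le_of_eq hjw.symm
        · exfalso
          have hh := hj w
          rw [if_pos rfl, if_neg hjw] at hh
          linarith
    have hpu : maxOther hn w
        (fun j => if j = i then (a : ℝ) else if j = w then (t w : ℝ) else (a' : ℝ)) = (a : ℝ) := by
      apply le_antisymm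
      · apply maxOther_le
        intro j hj
        by_cases hji : j = i
        · rw [if_pos hji]
        · rw [if_neg hji, if_neg hj]; exact le_of_lt hlt
      · have hh := le_maxOther hn w
          (fun j => if j = i then (a : ℝ) else if j = w then (t w : ℝ) else (a' : ℝ)) hiw'
        rwa [if_pos rfl] at hh
    have hpv : maxOther hn w (fun j => if j = w then (t w : ℝ) else (a' : ℝ)) = (a' : ℝ) := by
      apply le_antisymm
      · apply maxOther_le
        intro j hj
        rw [if_neg hj]
      · have hh := le_maxOther hn w (fun j => if j = w then (t w : ℝ) else (a' : ℝ)) hiw'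
        rwa [if_neg hiw'] at hh
    have hSPAuw : SPA hn
        (fun j => if j = i then (a : ℝ) else if j = w then (t w : ℝ) else (a' : ℝ)) w
        = (true, (a : ℝ)) := by
      simp only [SPA]
      split
      · next h => rw [← h, hpu]
      · next h => exact absurd hwu.symm h
    have hSPAvw : SPA hn (fun j => if j = w then (t w : ℝ) else (a' : ℝ)) w
        = (true, (a' : ℝ)) := by
      simp only [SPA]
      split
      · next h => rw [← h, hpv]
      · next h => exact absurd hwv.symm h
    have hSPAui : SPA hn
        (fun j => if j = i then (a : ℝ) else if j = w then (t w : ℝ) else (a' : ℝ)) i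
        = (false, 0) := by
      simp only [SPA]
      split
      · next h => exact absurd (h.trans hwu) hiw'
      · next => rfl
    have hcv : IndistCornersViolation
        (fun θ : (j : Fin n) → {x : ℝ // x ∈ Θ} => SPA hn fun j => ((θ j : ℝ)))
        (fun i x => x i) i a a' t t' := by
      refine ⟨?_, ?_, ?_⟩
      · show SPA hn (fun j => ((Function.update t i a j : {x : ℝ // x ∈ Θ}) : ℝ))
            = SPA hn (fun j => ((Function.update t i a' j : {x : ℝ // x ∈ Θ}) : ℝ))
        rw [hcoeF t a, hcoeF t a']
        exact hφ
      · show (SPA hn (fun j => ((Function.update t i a j : {x : ℝ // x ∈ Θ}) : ℝ))) i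
            = (SPA hn (fun j => ((Function.update t' i a j : {x : ℝ // x ∈ Θ}) : ℝ))) i
        rw [hcoeF t a, hu]
        exact hSPAa.trans hSPAui.symm
      · intro hcontra
        have hww : SPA hn
            (fun j => if j = i then (a : ℝ) else if j = w then (t w : ℝ) else (a' : ℝ)) w
            = SPA hn (fun j => if j = w then (t w : ℝ) else (a' : ℝ)) w := by
          rw [← hu, ← hv]
          exact congrFun hcontra w
        rw [hSPAuw, hSPAvw] at hww
        simp only [Prod.mk.injEq, true_and] at hww
        linarith
    exact oA_ne_of_corners hP himp hmin hcv
  · -- outcomes already differ, so the paths must differ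
    intro heq
    apply hφ
    have h := Protocol.outcome_eq_of_oA_eq heq
    have h1 : SPA hn (fun j => ((Function.update t i a j : {x : ℝ // x ∈ Θ}) : ℝ))
        = SPA hn (fun j => ((Function.update t i a' j : {x : ℝ // x ∈ Θ}) : ℝ)) :=
      (himp _).symm.trans (h.trans (himp _))
    rwa [hcoeF t a, hcoeF t a'] at h1

/-- Any minimally bidder-informative protocol implementing the second-price auction lets
the auctioneer distinguish all losing values: if both `a` and `a'` are weakly below the
highest competing value, the auctioneer's observations at `(a, t)` and `(a', t)` differ. -/
theorem spa_min_bidder_informative_distinguishes_losers {n : ℕ} (hn : 2 ≤ n)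
    (Θ : Finset ℝ) (hpos : ∀ x ∈ Θ, 0 ≤ x)
    (P : Protocol n (fun _ => {x : ℝ // x ∈ Θ}) (Fin n → Bool × ℝ)) (hP : P.Consistent)
    (himp : Implements P (fun θ => SPA hn fun j => (θ j : ℝ)))
    (hmin : MinimallyBidderInformative P (fun i x => x i)
      (fun θ => SPA hn fun j => (θ j : ℝ)))
    (i : Fin n) (a a' : {x : ℝ // x ∈ Θ}) (hne : a ≠ a')
    (t : (j : Fin n) → {x : ℝ // x ∈ Θ})
    (hla : (a : ℝ) ≤ maxOther hn i fun j => (t j : ℝ))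
    (hla' : (a' : ℝ) ≤ maxOther hn i fun j => (t j : ℝ)) :
    P.oA (Function.update t i a) ≠ P.oA (Function.update t i a') := by
  rcases lt_trichotomy ((a : ℝ)) ((a' : ℝ)) with h | h | h
  · exact (spa_key hn Θ P hP himp hmin i a' a t h hla').symm
  · exact absurd (Subtype.ext h) hne
  · exact spa_key hn Θ P hP himp hmin i a a' t h hla

end PrivacyPaper
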